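/- Let K be a field of characteristic 0, U a nonempty finite subset of ℤ, and d with 2d ≤ k. Then the images in A_{U,k} = P_U/Ann(Φ_{U,k}) of the monomials {x^{M(V)} : V ∈ C(U,2d)} span the degree-d homogeneous component A^{(d)} as a K-vector space; equivalently, every homogeneous polynomial of degree d in P_U is congruent modulo Ann(Φ_{U,k}) to a K-linear combination of the monomials x^{M(V)}, V ∈ C(U,2d). -/

import Mathlib

open MvPolynomial Finset

noncomputable section

/-- The set of matchings with exactly `k` edges of the complete graph on vertex set `V ⊆ ℤ`:
sets of `k` pairwise disjoint 2-element subsets of `V`. -/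
def matchings (V : Finset ℤ) (k : ℕ) : Finset (Finset (Finset ℤ)) :=
  (V.powersetCard 2).powerset.filter fun M =>
    M.card = k ∧ ∀ e ∈ M, ∀ f ∈ M, e ≠ f → Disjoint e f

/-- `S` is a matching of the complete graph on vertex set `V`. -/
def IsMatching (V : Finset ℤ) (S : Finset (Finset ℤ)) : Prop :=
  S ⊆ V.powersetCard 2 ∧ ∀ e ∈ S, ∀ f ∈ S, e ≠ f → Disjoint e f

/-- The weighted generating function `Φ_{V,k} = Σ_{M ∈ M(V,k)} x^M` of `k`-edge matchings,
an element of the polynomial ring with variables indexed by (potential) edges. -/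
def Phi (K : Type*) [Field K] (V : Finset ℤ) (k : ℕ) : MvPolynomial (Finset ℤ) K :=
  ∑ M ∈ matchings V k, ∏ e ∈ M, X e

/-- The differential operator `∂^S = Π_{i ∈ S} ∂/∂x_i` applied to `p`. -/
def dset {K : Type*} [CommSemiring K] {ι : Type*} [DecidableEq ι]
    (S : Finset ι) (p : MvPolynomial ι K) : MvPolynomial ι K :=
  S.toList.foldr (fun i q => pderiv i q) p

/-- The differential operator `∂^m = Π_i (∂/∂x_i)^{m i}` of a monomial exponent `m`. -/
def dmon {K : Type*} [CommSemiring K] {ι : Type*} [DecidableEq ι]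
    (m : ι →₀ ℕ) (p : MvPolynomial ι K) : MvPolynomial ι K :=
  m.support.toList.foldr (fun i q => (⇑(pderiv (R := K) i))^[m i] q) p

/-- The linear map `f ↦ f(∂)Φ`, where `f(∂)` is obtained from `f` by substituting
`∂/∂x_i` for `x_i`. -/
def diffOp (K : Type*) [Field K] {ι : Type*} [DecidableEq ι]
    (Φ : MvPolynomial ι K) : MvPolynomial ι K →ₗ[K] MvPolynomial ι K :=
  (basisMonomials ι K).constr K fun m => dmon m Φ

/-- The annihilator `Ann(Φ) = {f : f(∂)Φ = 0}`. -/
def Ann (K : Type*) [Field K] {ι : Type*} [DecidableEq ι]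
    (Φ : MvPolynomial ι K) : Submodule K (MvPolynomial ι K) :=
  LinearMap.ker (diffOp K Φ)

/-- The canonical matching `M(V) = {{v₁,v₂},{v₃,v₄},…}` on `V = {v₁ < v₂ < ⋯}`. -/
def canonMatching (V : Finset ℤ) : Finset (Finset ℤ) :=
  (Finset.range (V.card / 2)).image fun i =>
    ({(V.sort (· ≤ ·)).getD (2 * i) 0, (V.sort (· ≤ ·)).getD (2 * i + 1) 0} : Finset ℤ)

/-- The `n`-th elementary symmetric polynomial in the variables indexed by `U`. -/
def elemSymm (K : Type*) [Field K] {ι : Type*} (U : Finset ι) (n : ℕ) : MvPolynomial ι K :=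
  ∑ S ∈ U.powersetCard n, ∏ i ∈ S, X i

end

/-!
The operator `∂^m` kills a squarefree monomial `x^S` unless `m` is the indicator of some
`T ⊆ S`, in which case it yields `x^(S \ T)`. Summing over the matchings `M ⊇ T` of `K_U`, and
using that `M ↦ M \ T` is a bijection onto the `(k - |T|)`-matchings of `U` minus the vertices
of `T`, shows that `∂^m Φ_{U,k}` vanishes unless `m` is the indicator of a matching `T`, and then
depends only on the vertex set `V(T)`. So every monomial `x^m` of `f` may be replaced by the
canonical monomial `x^{M(V(T))}`, and homogeneity puts `V(T)` in `C(U, 2d)`.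
-/

section SquarefreeMonomials

variable {R : Type*} [CommSemiring R] {ι : Type*}

lemma foldr_iterate_pderiv_eq_prod (L : List ι) (n : ι → ℕ) (p : MvPolynomial ι R) :
    L.foldr (fun i q => (⇑(pderiv i))^[n i] q) p =
      (L.map fun i => (pderiv i).toLinearMap ^ n i).prod p := by
  induction L with
  | nil => rfl
  | cons a L ih => simp [ih, Module.End.pow_apply]

variable [DecidableEq ι]

lemma pderiv_prod_X_of_notMem {S : Finset ι} {i : ι} (hi : i ∉ S) :
    pderiv i (∏ j ∈ S, X j : MvPolynomial ι R) = 0 := by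
  induction S using Finset.induction_on with
  | empty => simp
  | insert a S haS ih =>
    rw [Finset.mem_insert, not_or] at hi
    rw [Finset.prod_insert haS, pderiv_mul, pderiv_X_of_ne (Ne.symm hi.1), ih hi.2]
    simp

lemma pderiv_prod_X (S : Finset ι) (i : ι) :
    pderiv i (∏ j ∈ S, X j : MvPolynomial ι R) =
      if i ∈ S then ∏ j ∈ S.erase i, X j else 0 := by
  split_ifs with hi
  · rw [← Finset.mul_prod_erase S _ hi, pderiv_mul, pderiv_X_self, one_mul,
      pderiv_prod_X_of_notMem (Finset.notMem_erase i S), mul_zero, add_zero]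
  · exact pderiv_prod_X_of_notMem hi

lemma iterate_pderiv_prod_X (S : Finset ι) (i : ι) {n : ℕ} (hn : n ≠ 0) :
    (⇑(pderiv i))^[n] (∏ j ∈ S, X j : MvPolynomial ι R) =
      if n = 1 ∧ i ∈ S then ∏ j ∈ S.erase i, X j else 0 := by
  obtain ⟨n, rfl⟩ := Nat.exists_eq_succ_of_ne_zero hn
  rw [Function.iterate_succ_apply, pderiv_prod_X]
  rcases n with _ | n
  · simp
  · have : pderiv i (∏ j ∈ S.erase i, X j : MvPolynomial ι R) = 0 :=
      pderiv_prod_X_of_notMem (Finset.notMem_erase i S)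
    split_ifs <;> simp_all [Function.iterate_succ_apply, iterate_map_zero]

lemma dmon_sum {α : Type*} (m : ι →₀ ℕ) (s : Finset α) (p : α → MvPolynomial ι R) :
    dmon m (∑ a ∈ s, p a) = ∑ a ∈ s, dmon m (p a) := by
  simp only [dmon, foldr_iterate_pderiv_eq_prod, map_sum]

lemma foldr_iterate_pderiv_prod_X (n : ι →₀ ℕ) (S : Finset ι) (L : List ι) (hL : L.Nodup)
    (hn : ∀ i ∈ L, n i ≠ 0) :
    L.foldr (fun i q => (⇑(pderiv i))^[n i] q) (∏ j ∈ S, X j : MvPolynomial ι R) =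
      if ∀ i ∈ L, n i = 1 ∧ i ∈ S then ∏ j ∈ S \ L.toFinset, X j else 0 := by
  induction L with
  | nil => simp
  | cons a L ih =>
    obtain ⟨haL, hL⟩ := List.nodup_cons.mp hL
    rw [List.foldr_cons, ih hL fun i hi => hn i (List.mem_cons_of_mem a hi)]
    by_cases hLS : ∀ i ∈ L, n i = 1 ∧ i ∈ S
    · rw [if_pos hLS, iterate_pderiv_prod_X _ _ (hn a List.mem_cons_self), List.toFinset_cons,
        Finset.sdiff_insert]
      refine if_congr ?_ rfl rfl
      simp only [mem_sdiff, List.mem_toFinset, haL, not_false_eq_true, and_true, List.mem_cons,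
        forall_eq_or_imp, iff_self_and, and_imp]
      exact fun _ _ => hLS
    · rw [if_neg hLS, iterate_map_zero,
        if_neg fun h => hLS fun i hi => h i (List.mem_cons_of_mem a hi)]

lemma dmon_prod_X (m : ι →₀ ℕ) (S : Finset ι) :
    dmon m (∏ j ∈ S, X j : MvPolynomial ι R) =
      if (∀ i ∈ m.support, m i = 1) ∧ m.support ⊆ S then ∏ j ∈ S \ m.support, X j
      else 0 := by
  rw [dmon, foldr_iterate_pderiv_prod_X _ _ _ m.support.nodup_toList
    fun i hi => Finsupp.mem_support_iff.mp (Finset.mem_toList.mp hi), Finset.toList_toFinset]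
  simp only [Finset.mem_toList, Finset.subset_iff, ← forall_and]

end SquarefreeMonomials

section DiffOp

variable {K : Type*} [Field K] {ι : Type*} [DecidableEq ι]

lemma diffOp_monomial_one (Φ : MvPolynomial ι K) (m : ι →₀ ℕ) :
    diffOp K Φ (monomial m 1) = dmon m Φ := by
  rw [diffOp, ← congrFun (coe_basisMonomials ι K) m, Module.Basis.constr_basis]

lemma diffOp_apply (Φ p : MvPolynomial ι K) :
    diffOp K Φ p = ∑ m ∈ p.support, coeff m p • dmon m Φ := by
  conv_lhs => rw [p.as_sum]
  simp only [map_sum, ← diffOp_monomial_one, ← map_smul, smul_eq_mul, mul_one]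

lemma diffOp_prod_X (Φ : MvPolynomial ι K) (T : Finset ι) :
    diffOp K Φ (∏ i ∈ T, X i) = dmon (Finsupp.indicator T fun _ _ => 1) Φ := by
  rw [← diffOp_monomial_one, ← prod_X_pow (fun _ => 1), prod_congr rfl fun _ _ => pow_one _]

end DiffOp

lemma support_indicator_one {ι : Type*} (T : Finset ι) :
    (Finsupp.indicator T fun _ _ => 1).support = T := by
  classical
  ext i
  simp [Finsupp.indicator_apply]

section Matchings

variable {U W : Finset ℤ} {M N T : Finset (Finset ℤ)}

lemma mem_matchings {k : ℕ} : M ∈ matchings U k ↔ IsMatching U M ∧ M.card = k := by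
  simp only [matchings, IsMatching, mem_filter, mem_powerset]
  tauto

lemma IsMatching.subset (hM : IsMatching U M) (hNM : N ⊆ M) : IsMatching U N :=
  ⟨hNM.trans hM.1, fun e he f hf => hM.2 e (hNM he) f (hNM hf)⟩

lemma IsMatching.mono (hM : IsMatching U M) (hUW : U ⊆ W) : IsMatching W M :=
  ⟨hM.1.trans (powersetCard_mono hUW), hM.2⟩

lemma IsMatching.card_biUnion (hM : IsMatching U M) : (M.biUnion id).card = 2 * M.card := by
  rw [Finset.card_biUnion (t := id) fun e he f hf hef => hM.2 e he f hf hef, mul_comm,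
    ← smul_eq_mul, ← sum_const]
  exact sum_congr rfl fun e he => (mem_powersetCard.mp (hM.1 he)).2

lemma IsMatching.biUnion_subset (hM : IsMatching U M) : M.biUnion id ⊆ U :=
  Finset.biUnion_subset.mpr fun _ he => (mem_powersetCard.mp (hM.1 he)).1

lemma IsMatching.sdiff (hM : IsMatching U M) (hTM : T ⊆ M) :
    IsMatching (U \ T.biUnion id) (M \ T) := by
  refine ⟨fun e he => ?_, fun e he f hf => hM.2 e (sdiff_subset he) f (sdiff_subset hf)⟩
  obtain ⟨heM, heT⟩ := mem_sdiff.mp he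
  obtain ⟨heU, he2⟩ := mem_powersetCard.mp (hM.1 heM)
  refine mem_powersetCard.mpr ⟨subset_sdiff.mpr ⟨heU, ?_⟩, he2⟩
  exact (disjoint_biUnion_right _ _ _).mpr fun f hf =>
    hM.2 e heM f (hTM hf) (ne_of_mem_of_not_mem hf heT).symm

lemma IsMatching.disjoint_of_sdiff (hN : IsMatching (U \ T.biUnion id) N) : Disjoint N T := by
  refine disjoint_left.mpr fun e heN heT => ?_
  obtain ⟨heU, he2⟩ := mem_powersetCard.mp (hN.1 heN)
  obtain ⟨x, hx⟩ := card_pos.mp (by omega : 0 < e.card)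
  exact (mem_sdiff.mp (heU hx)).2 (mem_biUnion.mpr ⟨e, heT, hx⟩)

lemma IsMatching.union_of_sdiff (hN : IsMatching (U \ T.biUnion id) N) (hT : IsMatching U T) :
    IsMatching U (N ∪ T) := by
  have hNT : ∀ e ∈ N, ∀ f ∈ T, Disjoint e f := fun e he f hf =>
    disjoint_of_subset_right (subset_biUnion_of_mem id hf)
      (subset_sdiff.mp (mem_powersetCard.mp (hN.1 he)).1).2
  refine ⟨union_subset (hN.mono sdiff_subset).1 hT.1, fun e he f hf hef => ?_⟩
  rcases mem_union.mp he with he | he <;> rcases mem_union.mp hf with hf | hf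
  exacts [hN.2 e he f hf hef, hNT e he f hf, (hNT f hf e he).symm, hT.2 e he f hf hef]

lemma sum_matchings_superset {β : Type*} [AddCommMonoid β] (g : Finset (Finset ℤ) → β)
    {k : ℕ} (hT : IsMatching U T) (hk : T.card ≤ k) :
    ∑ M ∈ matchings U k with T ⊆ M, g (M \ T) =
      ∑ N ∈ matchings (U \ T.biUnion id) (k - T.card), g N := by
  refine sum_nbij' (· \ T) (· ∪ T) (fun M hM => ?_) (fun N hN => ?_) (fun M hM => ?_)
    (fun N hN => ?_) fun _ _ => rfl
  · obtain ⟨hM, hTM⟩ := mem_filter.mp hM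
    obtain ⟨hMU, rfl⟩ := mem_matchings.mp hM
    exact mem_matchings.mpr ⟨hMU.sdiff hTM, card_sdiff_of_subset hTM⟩
  · obtain ⟨hN, hNk⟩ := mem_matchings.mp hN
    refine mem_filter.mpr ⟨mem_matchings.mpr ⟨hN.union_of_sdiff hT, ?_⟩, subset_union_right⟩
    rw [card_union_of_disjoint hN.disjoint_of_sdiff, hNk]
    omega
  · exact sdiff_union_of_subset (mem_filter.mp hM).2
  · exact union_sdiff_cancel_right (mem_matchings.mp hN).1.disjoint_of_sdiff

end Matchings

section CanonicalMatching

variable {V : Finset ℤ}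

lemma getD_sort_mem {j : ℕ} (hj : j < V.card) : (V.sort (· ≤ ·)).getD j 0 ∈ V := by
  rw [List.getD_eq_getElem _ _ (by rwa [length_sort])]
  exact (mem_sort _).mp (List.getElem_mem _)

lemma getD_sort_inj {i j : ℕ} (hi : i < V.card) (hj : j < V.card) :
    (V.sort (· ≤ ·)).getD i 0 = (V.sort (· ≤ ·)).getD j 0 ↔ i = j := by
  rw [List.getD_eq_getElem _ _ (by rwa [length_sort]),
    List.getD_eq_getElem _ _ (by rwa [length_sort])]
  exact (sort_nodup V _).getElem_inj_iff

lemma mem_canonMatching {e : Finset ℤ} :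
    e ∈ canonMatching V ↔ ∃ i < V.card / 2,
      {(V.sort (· ≤ ·)).getD (2 * i) 0, (V.sort (· ≤ ·)).getD (2 * i + 1) 0} = e := by
  simp only [canonMatching, mem_image, mem_range]

lemma isMatching_canonMatching (V : Finset ℤ) : IsMatching V (canonMatching V) := by
  refine ⟨fun e he => ?_, fun e he f hf hef => ?_⟩
  · obtain ⟨i, hi, rfl⟩ := mem_canonMatching.mp he
    rw [mem_powersetCard, insert_subset_iff, singleton_subset_iff,
      card_pair fun h => by simpa using (getD_sort_inj (by omega) (by omega)).mp h]
    exact ⟨⟨getD_sort_mem (by omega), getD_sort_mem (by omega)⟩, rfl⟩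
  · obtain ⟨i, hi, rfl⟩ := mem_canonMatching.mp he
    obtain ⟨j, hj, rfl⟩ := mem_canonMatching.mp hf
    have hij : i ≠ j := by rintro rfl; exact hef rfl
    simp (disch := omega) only [disjoint_insert_left, disjoint_insert_right, disjoint_singleton,
      mem_insert, mem_singleton, ne_eq, getD_sort_inj]
    omega

lemma biUnion_canonMatching (hV : Even V.card) : (canonMatching V).biUnion id = V := by
  refine (isMatching_canonMatching V).biUnion_subset.antisymm fun x hx => ?_
  obtain ⟨j, hj, rfl⟩ := List.mem_iff_getElem.mp ((mem_sort (· ≤ ·)).mpr hx)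
  rw [length_sort] at hj
  obtain ⟨d, hd⟩ := hV
  refine mem_biUnion.mpr ⟨_, mem_canonMatching.mpr ⟨j / 2, by omega, rfl⟩, ?_⟩
  rw [id, mem_insert, mem_singleton, ← List.getD_eq_getElem _ 0, getD_sort_inj hj (by omega),
    getD_sort_inj hj (by omega)]
  omega

end CanonicalMatching

def IsMatchingExponent (U : Finset ℤ) (m : Finset ℤ →₀ ℕ) : Prop :=
  (∀ e ∈ m.support, m e = 1) ∧ IsMatching U m.support

section DerivativesOfPhi

variable {K : Type*} [Field K] {U : Finset ℤ} {k : ℕ} {m : Finset ℤ →₀ ℕ}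

lemma dmon_Phi_eq_zero (h : ¬(IsMatchingExponent U m ∧ m.support.card ≤ k)) :
    dmon m (Phi K U k) = 0 := by
  rw [Phi, dmon_sum]
  refine sum_eq_zero fun M hM => ?_
  rw [dmon_prod_X, if_neg]
  rintro ⟨hsq, hmM⟩
  obtain ⟨hMU, rfl⟩ := mem_matchings.mp hM
  exact h ⟨⟨hsq, hMU.subset hmM⟩, card_le_card hmM⟩

lemma dmon_Phi_of_isMatchingExponent (hm : IsMatchingExponent U m) (hk : m.support.card ≤ k) :
    dmon m (Phi K U k) = Phi K (U \ m.support.biUnion id) (k - m.support.card) := by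
  simp only [Phi, dmon_sum, dmon_prod_X, and_iff_right hm.1]
  rw [← sum_filter]
  exact sum_matchings_superset (fun N => ∏ e ∈ N, X e) hm.2 hk

end DerivativesOfPhi

section MatchingExponents

variable {U : Finset ℤ} {m m' : Finset ℤ →₀ ℕ}

lemma isMatchingExponent_indicator {T : Finset (Finset ℤ)} (hT : IsMatching U T) :
    IsMatchingExponent U (Finsupp.indicator T fun _ _ => 1) := by
  rw [IsMatchingExponent, support_indicator_one]
  exact ⟨fun e he => Finsupp.indicator_of_mem he _, hT⟩

lemma IsMatchingExponent.biUnion_mem_powersetCard {d : ℕ} (hm : IsMatchingExponent U m)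
    (hd : m.degree = d) : m.support.biUnion id ∈ U.powersetCard (2 * d) := by
  have hcard : m.support.card = d := by
    rw [← hd, Finsupp.degree_apply, card_eq_sum_ones]
    exact sum_congr rfl fun e he => (hm.1 e he).symm
  exact mem_powersetCard.mpr ⟨hm.2.biUnion_subset, by rw [hm.2.card_biUnion, hcard]⟩

variable (K : Type*) [Field K] (k : ℕ)

lemma dmon_Phi_congr (hm : IsMatchingExponent U m) (hm' : IsMatchingExponent U m')
    (h : m.support.biUnion id = m'.support.biUnion id) :
    dmon m (Phi K U k) = dmon m' (Phi K U k) := by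
  have hcard : m.support.card = m'.support.card := by
    have := hm.2.card_biUnion
    rw [h, hm'.2.card_biUnion] at this
    omega
  by_cases hk : m.support.card ≤ k
  · rw [dmon_Phi_of_isMatchingExponent hm hk, dmon_Phi_of_isMatchingExponent hm' (hcard ▸ hk),
      h, hcard]
  · rw [dmon_Phi_eq_zero fun h => hk h.2, dmon_Phi_eq_zero fun h => hk (hcard ▸ h.2)]

lemma diffOp_prod_canonMatching (hm : IsMatchingExponent U m) :
    diffOp K (Phi K U k) (∏ e ∈ canonMatching (m.support.biUnion id), X e) =
      dmon m (Phi K U k) := by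
  rw [diffOp_prod_X]
  refine dmon_Phi_congr K k
    (isMatchingExponent_indicator ((isMatching_canonMatching _).mono hm.2.biUnion_subset)) hm ?_
  rw [support_indicator_one, biUnion_canonMatching (hm.2.card_biUnion ▸ even_two_mul _)]

end MatchingExponents

theorem canonical_monomials_span_general {K : Type*} [Field K]
    (U : Finset ℤ) (k d : ℕ)
    (f : MvPolynomial (Finset ℤ) K) (hf : f.IsHomogeneous d) :
    ∃ c : Finset ℤ → K,
      f - ∑ V ∈ U.powersetCard (2 * d), c V • ∏ e ∈ canonMatching V, X e ∈
        Ann K (Phi K U k) := by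
  classical
  set S := {m ∈ f.support | IsMatchingExponent U m}
  have hcover : ∀ m ∈ S, m.support.biUnion id ∈ U.powersetCard (2 * d) := fun m hm =>
    (mem_filter.mp hm).2.biUnion_mem_powersetCard <| by
      rw [Finsupp.degree_eq_weight_one]; exact hf (mem_support_iff.mp (mem_filter.mp hm).1)
  refine ⟨fun V => ∑ m ∈ S with m.support.biUnion id = V, coeff m f, ?_⟩
  have hregroup : ∑ V ∈ U.powersetCard (2 * d),
      (∑ m ∈ S with m.support.biUnion id = V, coeff m f) •
        (∏ e ∈ canonMatching V, X e : MvPolynomial _ K) =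
      ∑ m ∈ S, coeff m f • ∏ e ∈ canonMatching (m.support.biUnion id), X e := by
    rw [← sum_fiberwise_of_maps_to hcover]
    refine sum_congr rfl fun V _ => ?_
    rw [sum_smul]
    exact sum_congr rfl fun m hm => by rw [(mem_filter.mp hm).2]
  have hnonmatching : ∑ m ∈ f.support with ¬IsMatchingExponent U m,
      coeff m f • dmon m (Phi K U k) = 0 :=
    sum_eq_zero fun m hm => by
      rw [dmon_Phi_eq_zero fun h => (mem_filter.mp hm).2 h.1, smul_zero]
  rw [hregroup, Ann, LinearMap.mem_ker, map_sub, sub_eq_zero, diffOp_apply, map_sum,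
    ← sum_filter_add_sum_filter_not f.support (IsMatchingExponent U), hnonmatching, add_zero]
  exact sum_congr rfl fun m hm => by
    rw [map_smul, diffOp_prod_canonMatching K k (mem_filter.mp hm).2]

/-- for `2d ≤ k`, the monomials `x^{M(V)}`, `V ∈ C(U,2d)`, span the degree-`d`
component of `A_{U,k}`: every homogeneous `f` of degree `d` is congruent mod `Ann(Φ_{U,k})`
to a `K`-linear combination of the `x^{M(V)}`. -/
theorem canonical_monomials_span {K : Type*} [Field K] [CharZero K]
    (U : Finset ℤ) (hU : U.Nonempty) (k d : ℕ) (hd : 2 * d ≤ k)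
    (f : MvPolynomial (Finset ℤ) K) (hf : f.IsHomogeneous d) :
    ∃ c : Finset ℤ → K,
      f - ∑ V ∈ U.powersetCard (2 * d), c V • ∏ e ∈ canonMatching V, X e ∈
        Ann K (Phi K U k) :=
  canonical_monomials_span_general U k d f hf
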